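/- Under Assumption 3, for every x ∈ 𝒳, t ∈ 𝒯 and y ∈ 𝒴 such that P(X=x, T=t, R^X=1, R^T=1) > 0 and P(T=t, Y=y, R^X=1, R^T=1) > 0, the observed joint factorizes as P(Y=y, R^Y=1 | T=t, X=x, R^T=1, R^X=1) = P(Y=y | T=t, X=x) · P(R^Y=1 | T=t, Y=y, R^X=1, R^T=1). -/

import Mathlib

open scoped Classical
noncomputable section

namespace CATEMNAR

variable {Ω : Type*} [Fintype Ω]

/-- Probability of the event `E` under the pmf `p` on the finite space `Ω`. -/
def Pr (p : Ω → ℝ) (E : Ω → Prop) : ℝ := ∑ ω, if E ω then p ω else 0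

/-- Conditional probability `P(E | C)` (junk value `0` when `P(C) = 0`). -/
def CPr (p : Ω → ℝ) (E C : Ω → Prop) : ℝ := Pr p (fun ω => E ω ∧ C ω) / Pr p C

/-- Conditional independence `A ⫫ B | C` under `p`: for all values `a, b, c` with
`P(C = c) > 0`, `P(A = a, B = b | C = c) = P(A = a | C = c) * P(B = b | C = c)`. -/
def CondIndep {α β γ : Type*} (p : Ω → ℝ) (A : Ω → α) (B : Ω → β) (C : Ω → γ) : Prop :=
  ∀ (a : α) (b : β) (c : γ), 0 < Pr p (fun ω => C ω = c) →
    CPr p (fun ω => A ω = a ∧ B ω = b) (fun ω => C ω = c) =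
      CPr p (fun ω => A ω = a) (fun ω => C ω = c) *
        CPr p (fun ω => B ω = b) (fun ω => C ω = c)

theorem Pr_congr (p : Ω → ℝ) {E F : Ω → Prop} (h : ∀ ω, E ω ↔ F ω) :
    Pr p E = Pr p F :=
  Finset.sum_congr rfl fun ω _ => if_congr (h ω) rfl rfl

theorem Pr_mono (p : Ω → ℝ) (hp0 : ∀ ω, 0 ≤ p ω) {E F : Ω → Prop}
    (h : ∀ ω, E ω → F ω) : Pr p E ≤ Pr p F := by
  apply Finset.sum_le_sum
  intro ω _
  split_ifs with h1 h2
  · exact le_refl _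
  · exact absurd (h ω h1) h2
  · exact hp0 ω
  · exact le_refl _


/-- Under Assumption 3, the observed joint factorizes as
`P(Y=y, R^Y=1 | T=t, X=x, R^T=1, R^X=1)
  = P(Y=y | T=t, X=x) * P(R^Y=1 | T=t, Y=y, R^X=1, R^T=1)`. -/
theorem stmt_9 {𝒳 𝒯 𝒴 : Type*} [Fintype 𝒳] [Fintype 𝒯] [Fintype 𝒴]
    (p : Ω → ℝ) (hp0 : ∀ ω, 0 ≤ p ω) (hp1 : ∑ ω, p ω = 1)
    (X : Ω → 𝒳) (T : Ω → 𝒯) (Y : Ω → 𝒴) (RX RT RY : Ω → Bool)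
    (hRX : CondIndep p RX Y (fun ω => (X ω, T ω)))
    (hRT : CondIndep p RT Y (fun ω => (X ω, T ω, RX ω)))
    (hRY : CondIndep p RY X (fun ω => (T ω, Y ω, RX ω, RT ω)))
    (x : 𝒳) (t : 𝒯) (y : 𝒴)
    (hpos1 : 0 < Pr p (fun ω => X ω = x ∧ T ω = t ∧ RX ω = true ∧ RT ω = true))
    (hpos2 : 0 < Pr p (fun ω => T ω = t ∧ Y ω = y ∧ RX ω = true ∧ RT ω = true)) :
    CPr p (fun ω => Y ω = y ∧ RY ω = true)
        (fun ω => T ω = t ∧ X ω = x ∧ RT ω = true ∧ RX ω = true) =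
      CPr p (fun ω => Y ω = y) (fun ω => T ω = t ∧ X ω = x) *
        CPr p (fun ω => RY ω = true)
          (fun ω => T ω = t ∧ Y ω = y ∧ RX ω = true ∧ RT ω = true) := by
  -- canonical probabilities
  -- canonical probabilities
  have hP2 : 0 < Pr p (fun ω => X ω = x ∧ T ω = t) :=
    lt_of_lt_of_le hpos1 (Pr_mono p hp0 (fun ω h => ⟨h.1, h.2.1⟩))
  have hP3 : 0 < Pr p (fun ω => X ω = x ∧ T ω = t ∧ RX ω = true) :=
    lt_of_lt_of_le hpos1 (Pr_mono p hp0 (fun ω h => ⟨h.1, h.2.1, h.2.2.1⟩))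
  -- instantiate hRX at (true, y, (x,t))
  have h1 := hRX true y (x, t) (by
    rw [Pr_congr p (fun ω => by simp [Prod.ext_iff] :
      ∀ ω, ((X ω, T ω) = (x, t)) ↔ (X ω = x ∧ T ω = t))]
    exact hP2)
  simp only [CPr, Prod.mk.injEq] at h1
  rw [Pr_congr p (fun ω => by tauto :
        ∀ ω, ((RX ω = true ∧ Y ω = y) ∧ X ω = x ∧ T ω = t) ↔
          (Y ω = y ∧ X ω = x ∧ T ω = t ∧ RX ω = true)),
      Pr_congr p (fun ω => by tauto :
        ∀ ω, (RX ω = true ∧ X ω = x ∧ T ω = t) ↔ (X ω = x ∧ T ω = t ∧ RX ω = true))] at h1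
  -- instantiate hRT at (true, y, (x,t,true))
  have h2 := hRT true y (x, t, true) (by
    rw [Pr_congr p (fun ω => by simp [Prod.ext_iff] :
      ∀ ω, ((X ω, T ω, RX ω) = (x, t, true)) ↔ (X ω = x ∧ T ω = t ∧ RX ω = true))]
    exact hP3)
  simp only [CPr, Prod.mk.injEq] at h2
  rw [Pr_congr p (fun ω => by tauto :
        ∀ ω, ((RT ω = true ∧ Y ω = y) ∧ X ω = x ∧ T ω = t ∧ RX ω = true) ↔
          (Y ω = y ∧ X ω = x ∧ T ω = t ∧ RX ω = true ∧ RT ω = true)),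
      Pr_congr p (fun ω => by tauto :
        ∀ ω, (RT ω = true ∧ X ω = x ∧ T ω = t ∧ RX ω = true) ↔
          (X ω = x ∧ T ω = t ∧ RX ω = true ∧ RT ω = true)),
      Pr_congr p (fun ω => by tauto :
        ∀ ω, (Y ω = y ∧ X ω = x ∧ T ω = t ∧ RX ω = true) ↔
          (Y ω = y ∧ X ω = x ∧ T ω = t ∧ RX ω = true))] at h2
  -- instantiate hRY at (true, x, (t,y,true,true))
  have h3 := hRY true x (t, y, true, true) (by
    rw [Pr_congr p (fun ω => by simp [Prod.ext_iff] :
      ∀ ω, ((T ω, Y ω, RX ω, RT ω) = (t, y, true, true)) ↔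
        (T ω = t ∧ Y ω = y ∧ RX ω = true ∧ RT ω = true))]
    exact hpos2)
  simp only [CPr, Prod.mk.injEq] at h3
  rw [Pr_congr p (fun ω => by tauto :
        ∀ ω, ((RY ω = true ∧ X ω = x) ∧ T ω = t ∧ Y ω = y ∧ RX ω = true ∧ RT ω = true) ↔
          (RY ω = true ∧ X ω = x ∧ T ω = t ∧ Y ω = y ∧ RX ω = true ∧ RT ω = true)),
      Pr_congr p (fun ω => by tauto :
        ∀ ω, (X ω = x ∧ T ω = t ∧ Y ω = y ∧ RX ω = true ∧ RT ω = true) ↔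
          (Y ω = y ∧ X ω = x ∧ T ω = t ∧ RX ω = true ∧ RT ω = true))] at h3
  -- rewrite the goal into canonical form
  simp only [CPr]
  rw [Pr_congr p (fun ω => by tauto :
        ∀ ω, ((Y ω = y ∧ RY ω = true) ∧ T ω = t ∧ X ω = x ∧ RT ω = true ∧ RX ω = true) ↔
          (RY ω = true ∧ X ω = x ∧ T ω = t ∧ Y ω = y ∧ RX ω = true ∧ RT ω = true)),
      Pr_congr p (fun ω => by tauto :
        ∀ ω, (T ω = t ∧ X ω = x ∧ RT ω = true ∧ RX ω = true) ↔
          (X ω = x ∧ T ω = t ∧ RX ω = true ∧ RT ω = true)),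
      Pr_congr p (fun ω => by tauto :
        ∀ ω, (Y ω = y ∧ T ω = t ∧ X ω = x) ↔ (Y ω = y ∧ X ω = x ∧ T ω = t)),
      Pr_congr p (fun ω => by tauto :
        ∀ ω, (T ω = t ∧ X ω = x) ↔ (X ω = x ∧ T ω = t)),
      Pr_congr p (fun ω => by tauto :
        ∀ ω, (RY ω = true ∧ T ω = t ∧ Y ω = y ∧ RX ω = true ∧ RT ω = true) ↔
          (RY ω = true ∧ T ω = t ∧ Y ω = y ∧ RX ω = true ∧ RT ω = true))]
  -- now pure algebra
  set P2 := Pr p (fun ω => X ω = x ∧ T ω = t) with hP2d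
  set P3 := Pr p (fun ω => X ω = x ∧ T ω = t ∧ RX ω = true) with hP3d
  set PB := Pr p (fun ω => X ω = x ∧ T ω = t ∧ RX ω = true ∧ RT ω = true) with hPBd
  set PD := Pr p (fun ω => T ω = t ∧ Y ω = y ∧ RX ω = true ∧ RT ω = true) with hPDd
  set PY := Pr p (fun ω => Y ω = y ∧ X ω = x ∧ T ω = t) with hPYd
  set A3 := Pr p (fun ω => Y ω = y ∧ X ω = x ∧ T ω = t ∧ RX ω = true) with hA3d
  set A := Pr p (fun ω => Y ω = y ∧ X ω = x ∧ T ω = t ∧ RX ω = true ∧ RT ω = true) with hAd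
  set N := Pr p (fun ω => RY ω = true ∧ X ω = x ∧ T ω = t ∧ Y ω = y ∧ RX ω = true ∧ RT ω = true) with hNd
  set RD := Pr p (fun ω => RY ω = true ∧ T ω = t ∧ Y ω = y ∧ RX ω = true ∧ RT ω = true) with hRDd
  -- h1 : A3 / P2 = P3 / P2 * (PY / P2)
  -- h2 : A / P3 = PB / P3 * (A3 / P3)
  -- h3 : N / PD = RD / PD * (A / PD)
  -- goal : N / PB = PY / P2 * (RD / PD)
  have e1 : A3 * P2 = P3 * PY := by
    field_simp at h1
    exact mul_right_cancel₀ (ne_of_gt hP2) (by linear_combination P2 * h1)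
  have e2 : A * P3 = PB * A3 := by
    field_simp at h2
    exact mul_right_cancel₀ (ne_of_gt hP3) (by linear_combination P3 * h2)
  have e3 : N * PD = RD * A := by
    field_simp at h3
    exact mul_right_cancel₀ (ne_of_gt hpos2) (by linear_combination PD * h3)
  have eAP : A * P2 = PB * PY := by
    have : A * P3 * P2 = PB * PY * P3 := by
      calc A * P3 * P2 = PB * (A3 * P2) := by rw [e2]; ring
        _ = PB * PY * P3 := by rw [e1]; ring
    exact mul_right_cancel₀ (ne_of_gt hP3) (by linear_combination this)
  rw [div_eq_iff (ne_of_gt hpos1), eq_comm]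
  field_simp
  calc PY * RD * PB = RD * (A * P2) := by rw [eAP]; ring
    _ = (N * PD) * P2 := by rw [e3]; ring
    _ = P2 * PD * N := by ring



end CATEMNAR
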